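/- arXiv:1412.2068 — 2 statements merged into one kernel-verified Lean document; each statement's English description precedes it below -/
import Mathlib

section
/- Let N ≥ 1, let U ⊆ ℝ^N be open, let ρ : U → ℝ and ρ₀ > 0 satisfy ρ(x) ≥ ρ₀ for all x ∈ U, and let V : U → ℝ be twice continuously differentiable with ΔV(x) ≤ −ρ(x) for all x ∈ U. Let G : ℝ → ℝ be continuously differentiable with G′(s) ≥ α₀ > 0 for all s ∈ ℝ. Fix x₀ ∈ ℝ^N, t₀ ∈ ℝ, real numbers σ, c, reals λ ≥ 0, β ≥ 0, δ > 0, and M with M ≥ 2βN/ρ₀ + 2λδ/α₀. Suppose w : U × ℝ → ℝ satisfies G(w(x,t)) = M·V(x) + σ + c + λ(t−t₀)² + β‖x−x₀‖² for all (x,t) ∈ U × ℝ. Then for every x ∈ U and every t with |t−t₀| ≤ δ, the function t ↦ w(x,t) is differentiable and ρ(x)·∂ₜw(x,t) ≥ Δₓ(G∘w(·,t))(x), where Δₓ(G∘w(·,t)) denotes the Laplacian in x of the map y ↦ G(w(y,t)). -/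
/-!
Since `G' ≥ α₀ > 0`, `G` is injective with a differentiable local inverse, so `w(x, ·)` is
differentiable with `∂ₜw = 2λ(t - t₀) / G'(w) ≥ -2λδ/α₀` for `|t - t₀| ≤ δ`. In space, `G ∘ w(·, t)`
is the barrier `MV + const + β‖· - x₀‖²`, whose Laplacian is `MΔV + 2βN ≤ -Mρ + 2βN`. The choice
of `M` makes `2βN ≤ ρ (M - 2λδ/α₀)` because `ρ ≥ ρ₀`, which gives `Δ(G ∘ w) ≤ -ρ·2λδ/α₀ ≤ ρ ∂ₜw`.
-/

/-- The Laplacian of `f : ℝ^N → ℝ`: the sum of the second partial derivatives. -/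
noncomputable def LaplacianEuc {N : ℕ} (f : EuclideanSpace ℝ (Fin N) → ℝ)
    (x : EuclideanSpace ℝ (Fin N)) : ℝ :=
  ∑ i : Fin N,
    fderiv ℝ (fun y => fderiv ℝ f y (EuclideanSpace.single i 1)) x (EuclideanSpace.single i 1)

open Filter Topology Laplacian Module InnerProductSpace

theorem HasStrictDerivAt.hasDerivAt_of_comp_eventuallyEq {G u g : ℝ → ℝ} {G' g' t : ℝ}
    (hG : HasStrictDerivAt G G' (u t)) (hG' : G' ≠ 0) (hinj : Function.Injective G)
    (hg : HasDerivAt g g' t) (hu : G ∘ u =ᶠ[𝓝 t] g) :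
    HasDerivAt u (G'⁻¹ * g') t := by
  set φ := hG.localInverse G G' (u t) hG'
  have hut : G (u t) = g t := hu.self_of_nhds
  have hφ : HasDerivAt φ G'⁻¹ (g t) := hut ▸ (hG.to_localInverse hG').hasDerivAt
  have hright : ∀ᶠ τ in 𝓝 t, G (φ (g τ)) = g τ :=
    hg.continuousAt.eventually (hut ▸ (hG.hasStrictFDerivAt_equiv hG').eventually_right_inverse)
  have hu_eq : u =ᶠ[𝓝 t] φ ∘ g := by
    filter_upwards [hu, hright] with τ hτ hφτ
    exact hinj (hτ.trans hφτ.symm)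
  exact (hφ.comp t hg).congr_of_eventuallyEq hu_eq

theorem laplacianEuc_eq_laplacian {N : ℕ} {f : EuclideanSpace ℝ (Fin N) → ℝ}
    {x : EuclideanSpace ℝ (Fin N)} (hf : ContDiffAt ℝ 2 f x) :
    LaplacianEuc f x = Δ f x := by
  have hf' : DifferentiableAt ℝ (fderiv ℝ f) x :=
    (hf.fderiv_right (m := 1) le_rfl).differentiableAt one_ne_zero
  rw [laplacian_eq_iteratedFDeriv_orthonormalBasis f (EuclideanSpace.basisFun (Fin N) ℝ)]
  refine Finset.sum_congr rfl fun i _ => ?_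
  rw [iteratedFDeriv_two_apply, fderiv_clm_apply hf' (differentiableAt_const _)]
  simp

section

variable {E : Type*} [NormedAddCommGroup E] [InnerProductSpace ℝ E] [FiniteDimensional ℝ E]

theorem laplacian_norm_sub_sq (x₀ x : E) :
    Δ (fun y => ‖y - x₀‖ ^ 2) x = 2 * finrank ℝ E := by
  have hfd : fderiv ℝ (fun y => ‖y - x₀‖ ^ 2) = fun y => 2 • (innerSL ℝ y - innerSL ℝ x₀) := by
    ext1 y
    simpa using (((hasFDerivAt_id y).sub_const x₀).norm_sq).fderiv
  have hfd2 : fderiv ℝ (fderiv ℝ fun y => ‖y - x₀‖ ^ 2) x = 2 • innerSL ℝ := by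
    rw [hfd]
    exact (((innerSL ℝ).hasFDerivAt.sub_const _).const_smul (2 : ℕ)).fderiv
  rw [laplacian_eq_iteratedFDeriv_stdOrthonormalBasis]
  have hb (i) : innerSL ℝ (stdOrthonormalBasis ℝ E i) (stdOrthonormalBasis ℝ E i) = 1 := by
    rw [innerSL_apply_apply, real_inner_self_eq_norm_sq, (stdOrthonormalBasis ℝ E).norm_eq_one,
      one_pow]
  simp [iteratedFDeriv_two_apply, hfd2, hb, mul_comm]

theorem laplacian_barrier {V : E → ℝ} {x : E} (hV : ContDiffAt ℝ 2 V x) (M C β : ℝ) (x₀ : E) :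
    Δ (fun y => M * V y + C + β * ‖y - x₀‖ ^ 2) x = M * Δ V x + 2 * β * finrank ℝ E := by
  have hq : ContDiffAt ℝ 2 (fun y => ‖y - x₀‖ ^ 2) x :=
    (contDiffAt_id.sub contDiffAt_const).norm_sq ℝ
  have hMV : ContDiffAt ℝ 2 (M • V) x := hV.const_smul M
  have hC : ContDiffAt ℝ 2 (fun _ : E => C) x := contDiffAt_const
  have hsplit : (fun y => M * V y + C + β * ‖y - x₀‖ ^ 2)
      = (M • V + fun _ => C) + β • fun y => ‖y - x₀‖ ^ 2 := by
    ext y; simp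
  have hβq : ContDiffAt ℝ 2 (β • fun y => ‖y - x₀‖ ^ 2) x := hq.const_smul β
  rw [hsplit, ContDiffAt.laplacian_add (f₁ := M • V + fun _ => C) (hMV.add hC) hβq,
    hMV.laplacian_add hC, laplacian_smul M hV, laplacian_smul β hq, laplacian_norm_sub_sq,
    laplacian_const]
  simp only [smul_eq_mul, Pi.zero_apply, add_zero]
  ring

end

theorem supersolution_inequality {ρ ρ₀ α₀ d L lam β δ M τ N : ℝ} (hN : 0 ≤ N)
    (hρ₀ : 0 < ρ₀) (hρ : ρ₀ ≤ ρ) (hL : L ≤ -ρ) (hα₀ : 0 < α₀) (hd : α₀ ≤ d)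
    (hlam : 0 ≤ lam) (hβ : 0 ≤ β) (hτ : |τ| ≤ δ)
    (hM : 2 * β * N / ρ₀ + 2 * lam * δ / α₀ ≤ M) :
    M * L + 2 * β * N ≤ ρ * (d⁻¹ * (2 * lam * τ)) := by
  have hρ0 : 0 < ρ := hρ₀.trans_le hρ
  have hδ : 0 ≤ δ := (abs_nonneg τ).trans hτ
  have hdrift_abs : |d⁻¹ * (2 * lam * τ)| ≤ 2 * lam * δ / α₀ := by
    rw [abs_mul, abs_mul, abs_of_pos (inv_pos.2 (hα₀.trans_le hd)), abs_of_nonneg (by positivity),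
      inv_mul_eq_div]
    exact div_le_div₀ (by positivity) (by gcongr) hα₀ hd
  have hdiffusion : 2 * β * N ≤ ρ * (M - 2 * lam * δ / α₀) :=
    calc 2 * β * N = ρ₀ * (2 * β * N / ρ₀) := by field_simp
      _ ≤ ρ * (M - 2 * lam * δ / α₀) := by
        gcongr
        linarith
  have hM0 : 0 ≤ M := le_trans (by positivity) hM
  calc M * L + 2 * β * N ≤ M * -ρ + ρ * (M - 2 * lam * δ / α₀) := by gcongr
    _ = ρ * -(2 * lam * δ / α₀) := by ring
    _ ≤ ρ * (d⁻¹ * (2 * lam * τ)) := by gcongr; exact neg_le_of_abs_le hdrift_abs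

theorem stmt_5_general (N : ℕ) (U : Set (EuclideanSpace ℝ (Fin N))) (hU : IsOpen U)
    (ρ : EuclideanSpace ℝ (Fin N) → ℝ) (ρ₀ : ℝ) (hρ₀ : 0 < ρ₀)
    (hρ : ∀ x ∈ U, ρ₀ ≤ ρ x)
    (V : EuclideanSpace ℝ (Fin N) → ℝ) (hV : ContDiffOn ℝ 2 V U)
    (hΔV : ∀ x ∈ U, LaplacianEuc V x ≤ -ρ x)
    (G : ℝ → ℝ) (hG : ContDiff ℝ 1 G)
    (α₀ : ℝ) (hα₀ : 0 < α₀) (hG' : ∀ s : ℝ, α₀ ≤ deriv G s)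
    (x₀ : EuclideanSpace ℝ (Fin N)) (t₀ σ c lam β δ M : ℝ)
    (hlam : 0 ≤ lam) (hβ : 0 ≤ β)
    (hM : 2 * β * N / ρ₀ + 2 * lam * δ / α₀ ≤ M)
    (w : EuclideanSpace ℝ (Fin N) → ℝ → ℝ)
    (hw : ∀ x ∈ U, ∀ t : ℝ,
      G (w x t) = M * V x + σ + c + lam * (t - t₀) ^ 2 + β * ‖x - x₀‖ ^ 2) :
    ∀ x ∈ U, ∀ t : ℝ, |t - t₀| ≤ δ →
      DifferentiableAt ℝ (w x) t ∧
      LaplacianEuc (fun y => G (w y t)) x ≤ ρ x * deriv (w x) t := by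
  intro x hx t ht
  have hG'pos (s : ℝ) : 0 < deriv G s := hα₀.trans_le (hG' s)
  have hdw : HasDerivAt (w x) ((deriv G (w x t))⁻¹ * (2 * lam * (t - t₀))) t := by
    refine (hG.contDiffAt.hasStrictDerivAt one_ne_zero).hasDerivAt_of_comp_eventuallyEq
      (hG'pos _).ne' (strictMono_of_deriv_pos hG'pos).injective ?_ (.of_forall (hw x hx))
    have hsq : HasDerivAt (fun τ => (τ - t₀) ^ 2) (2 * (t - t₀)) t := by
      simpa using ((hasDerivAt_id t).sub_const t₀).fun_pow 2
    exact (((hsq.const_mul lam).const_add _).add_const _).congr_deriv (by ring)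
  have hVx : ContDiffAt ℝ 2 V x := hV.contDiffAt (hU.mem_nhds hx)
  have hGw : (fun y => G (w y t)) =ᶠ[𝓝 x]
      fun y => M * V y + (σ + c + lam * (t - t₀) ^ 2) + β * ‖y - x₀‖ ^ 2 :=
    eventually_of_mem (hU.mem_nhds hx) fun y hy => (hw y hy t).trans (by ring)
  have hbarrier : ContDiffAt ℝ 2
      (fun y => M * V y + (σ + c + lam * (t - t₀) ^ 2) + β * ‖y - x₀‖ ^ 2) x :=
    ((hVx.const_smul M).add contDiffAt_const).add
      (((contDiffAt_id.sub contDiffAt_const).norm_sq ℝ).const_smul β)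
  have hΔ : LaplacianEuc (fun y => G (w y t)) x = M * LaplacianEuc V x + 2 * β * N := by
    rw [laplacianEuc_eq_laplacian (hbarrier.congr_of_eventuallyEq hGw),
      (laplacian_congr_nhds hGw).self_of_nhds, laplacian_barrier hVx,
      laplacianEuc_eq_laplacian hVx, finrank_euclideanSpace_fin]
  refine ⟨hdw.differentiableAt, ?_⟩
  rw [hΔ, hdw.deriv]
  exact supersolution_inequality (Nat.cast_nonneg N) hρ₀ (hρ x hx) (hΔV x hx) hα₀ (hG' _) hlam hβ
    ht hM

/-- The upper barrier `w = G⁻¹[MV + σ + c + λ(t-t₀)² + β‖x-x₀‖²]` is a pointwise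
supersolution of `ρ ∂ₜ u = Δ[G(u)]` when `inf ρ ≥ ρ₀ > 0`. -/
theorem stmt_5 (N : ℕ) (hN : 1 ≤ N) (U : Set (EuclideanSpace ℝ (Fin N))) (hU : IsOpen U)
    (ρ : EuclideanSpace ℝ (Fin N) → ℝ) (ρ₀ : ℝ) (hρ₀ : 0 < ρ₀)
    (hρ : ∀ x ∈ U, ρ₀ ≤ ρ x)
    (V : EuclideanSpace ℝ (Fin N) → ℝ) (hV : ContDiffOn ℝ 2 V U)
    (hΔV : ∀ x ∈ U, LaplacianEuc V x ≤ -ρ x)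
    (G : ℝ → ℝ) (hG : ContDiff ℝ 1 G)
    (α₀ : ℝ) (hα₀ : 0 < α₀) (hG' : ∀ s : ℝ, α₀ ≤ deriv G s)
    (x₀ : EuclideanSpace ℝ (Fin N)) (t₀ σ c lam β δ M : ℝ)
    (hlam : 0 ≤ lam) (hβ : 0 ≤ β) (hδ : 0 < δ)
    (hM : 2 * β * N / ρ₀ + 2 * lam * δ / α₀ ≤ M)
    (w : EuclideanSpace ℝ (Fin N) → ℝ → ℝ)
    (hw : ∀ x ∈ U, ∀ t : ℝ,
      G (w x t) = M * V x + σ + c + lam * (t - t₀) ^ 2 + β * ‖x - x₀‖ ^ 2) :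
    ∀ x ∈ U, ∀ t : ℝ, |t - t₀| ≤ δ →
      DifferentiableAt ℝ (w x) t ∧
      LaplacianEuc (fun y => G (w y t)) x ≤ ρ x * deriv (w x) t :=
  stmt_5_general N U hU ρ ρ₀ hρ₀ hρ V hV hΔV G hG α₀ hα₀ hG' x₀ t₀ σ c lam β δ M hlam hβ hM w hw
end

section
/- Let N ≥ 1, let U ⊆ ℝ^N be open, let ρ : U → ℝ and P > 0 satisfy 0 ≤ ρ(x) ≤ P for all x ∈ U, and let h : U → ℝ be twice continuously differentiable with Δh(x) ≤ −1 for all x ∈ U. Let G : ℝ → ℝ be continuously differentiable with G′(s) ≥ α₀ > 0 for all s ∈ ℝ. Fix t₀ ∈ ℝ, real numbers σ, c, reals λ ≥ 0, δ > 0, and M with M ≥ 2λδP/α₀. Suppose w : U × ℝ → ℝ satisfies G(w(x,t)) = M·h(x) + σ + c + λ(t−t₀)² for all (x,t) ∈ U × ℝ. Then for every x ∈ U and every t with |t−t₀| ≤ δ, the function t ↦ w(x,t) is differentiable and ρ(x)·∂ₜw(x,t) ≥ Δₓ(G∘w(·,t))(x), where Δₓ(G∘w(·,t)) denotes the Laplacian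 in x of the map y ↦ G(w(y,t)). -/
/-- The Laplacian of `f : ℝ^N → ℝ`: the sum of the second partial derivatives. -/
noncomputable def stmtLaplacian {N : ℕ} (f : EuclideanSpace ℝ (Fin N) → ℝ)
    (x : EuclideanSpace ℝ (Fin N)) : ℝ :=
  ∑ i : Fin N,
    fderiv ℝ (fun y => fderiv ℝ f y (EuclideanSpace.single i 1)) x (EuclideanSpace.single i 1)

/-!
The barrier satisfies `G(w) = M h + (terms depending on t only)`, so `Δ[G(w)] = M Δh ≤ -M`.
On the other hand `∂ₜ w = 2λ(t - t₀) / G'(w)` with `G' ≥ α₀`, so for `|t - t₀| ≤ δ` and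
`0 ≤ ρ ≤ P` we get `|ρ ∂ₜ w| ≤ 2λδP/α₀ ≤ M`. Differentiability of `w` in `t` comes from the
fact that `G' ≥ α₀ > 0` makes `G` an order isomorphism of `ℝ` with a differentiable inverse.
-/

open Filter Topology

section DerivBoundedBelow

variable {f : ℝ → ℝ} {α : ℝ}

theorem differentiable_of_pos_le_deriv (hα : 0 < α) (hf : ∀ x, α ≤ deriv f x) :
    Differentiable ℝ f := fun x =>
  differentiableAt_of_deriv_ne_zero (hα.trans_le (hf x)).ne'

theorem surjective_of_pos_le_deriv (hα : 0 < α) (hf : ∀ x, α ≤ deriv f x) :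
    Function.Surjective f := by
  have hdiff := differentiable_of_pos_le_deriv hα hf
  have hgrowth := mul_sub_le_image_sub_of_le_deriv hdiff hf
  have hlin : Tendsto (fun y => f 0 + α * y) atTop atTop :=
    tendsto_atTop_add_const_left _ _ (tendsto_id.const_mul_atTop hα)
  have hlin' : Tendsto (fun y => f 0 + α * y) atBot atBot :=
    tendsto_atBot_add_const_left _ _ (tendsto_id.const_mul_atBot hα)
  refine hdiff.continuous.surjective (tendsto_atTop_mono' _ ?_ hlin)
    (tendsto_atBot_mono' _ ?_ hlin')
  · filter_upwards [eventually_ge_atTop 0] with y hy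
    linarith [hgrowth hy]
  · filter_upwards [eventually_le_atBot 0] with y hy
    linarith [hgrowth hy]

theorem exists_hasDerivAt_rightInverse_of_pos_le_deriv (hα : 0 < α)
    (hf : ∀ x, α ≤ deriv f x) :
    ∃ g : ℝ → ℝ, (∀ y, f (g y) = y) ∧ ∀ y, HasDerivAt g (deriv f (g y))⁻¹ y := by
  let e := (strictMono_of_deriv_pos fun x => hα.trans_le (hf x)).orderIsoOfSurjective f
    (surjective_of_pos_le_deriv hα hf)
  have hright : ∀ y, f (e.symm y) = y := e.apply_symm_apply
  refine ⟨e.symm, hright, fun y => ?_⟩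
  exact HasDerivAt.of_local_left_inverse e.symm.continuous.continuousAt
    ((differentiable_of_pos_le_deriv hα hf _).hasDerivAt)
    (hα.trans_le (hf _)).ne' (Eventually.of_forall hright)

theorem hasDerivAt_of_comp_eq_of_pos_le_deriv (hα : 0 < α) (hf : ∀ x, α ≤ deriv f x)
    {u F : ℝ → ℝ} {F' t : ℝ} (hu : ∀ s, f (u s) = F s) (hF : HasDerivAt F F' t) :
    HasDerivAt u ((deriv f (u t))⁻¹ * F') t := by
  obtain ⟨g, hfg, hg⟩ := exists_hasDerivAt_rightInverse_of_pos_le_deriv hα hf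
  have hug : u = g ∘ F := funext fun s =>
    (strictMono_of_deriv_pos fun x => hα.trans_le (hf x)).injective (by simp [hu, hfg])
  rw [hug]
  exact (hg _).comp t hF

end DerivBoundedBelow

theorem abs_mul_inv_mul_le_div {ρ P d α v V : ℝ} (hρ : 0 ≤ ρ) (hρP : ρ ≤ P) (hα : 0 < α)
    (hd : α ≤ d) (hv : |v| ≤ V) : |ρ * (d⁻¹ * v)| ≤ P * V / α := by
  calc |ρ * (d⁻¹ * v)| = ρ * |v| / d := by
        rw [abs_mul, abs_mul, abs_inv, abs_of_nonneg hρ, abs_of_pos (hα.trans_le hd)]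
        ring
    _ ≤ P * V / α := by
        have hP : 0 ≤ P := hρ.trans hρP
        have hV : 0 ≤ V := (abs_nonneg v).trans hv
        gcongr

section Laplacian

variable {N : ℕ}

theorem stmtLaplacian_congr {f g : EuclideanSpace ℝ (Fin N) → ℝ}
    {x : EuclideanSpace ℝ (Fin N)} (hfg : f =ᶠ[𝓝 x] g) :
    stmtLaplacian f x = stmtLaplacian g x := by
  unfold stmtLaplacian
  refine Finset.sum_congr rfl fun i _ => ?_
  have h : (fun y => fderiv ℝ f y (EuclideanSpace.single i 1)) =ᶠ[𝓝 x]
      (fun y => fderiv ℝ g y (EuclideanSpace.single i 1)) :=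
    (hfg.fderiv (𝕜 := ℝ)).mono fun y hy => by simp only [hy]
  rw [h.fderiv_eq]

theorem stmtLaplacian_const_mul_add_const {h : EuclideanSpace ℝ (Fin N) → ℝ}
    {x : EuclideanSpace ℝ (Fin N)} (hh : ContDiffAt ℝ 2 h x) (M C : ℝ) :
    stmtLaplacian (fun y => M * h y + C) x = M * stmtLaplacian h x := by
  unfold stmtLaplacian
  rw [Finset.mul_sum]
  refine Finset.sum_congr rfl fun i _ => ?_
  set v := EuclideanSpace.single i (1 : ℝ)
  have hfirst : (fun y => fderiv ℝ (fun z => M * h z + C) y v) =ᶠ[𝓝 x]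
      (fun y => M * fderiv ℝ h y v) := by
    filter_upwards [hh.eventually (by simp)] with y hy
    rw [fderiv_add_const, fderiv_const_mul (hy.differentiableAt (by norm_num))]
    simp
  have hsecond : DifferentiableAt ℝ (fun y => fderiv ℝ h y v) x :=
    ((hh.fderiv_right (m := 1) le_rfl).differentiableAt (by norm_num)).clm_apply
      (differentiableAt_const v)
  rw [hfirst.fderiv_eq, fderiv_const_mul hsecond]
  simp

end Laplacian

theorem stmt_7_general (N : ℕ) (U : Set (EuclideanSpace ℝ (Fin N))) (hU : IsOpen U)
    (ρ : EuclideanSpace ℝ (Fin N) → ℝ) (P : ℝ)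
    (hρ : ∀ x ∈ U, 0 ≤ ρ x ∧ ρ x ≤ P)
    (h : EuclideanSpace ℝ (Fin N) → ℝ) (hh : ContDiffOn ℝ 2 h U)
    (hΔh : ∀ x ∈ U, stmtLaplacian h x ≤ -1)
    (G : ℝ → ℝ)
    (α₀ : ℝ) (hα₀ : 0 < α₀) (hG' : ∀ s : ℝ, α₀ ≤ deriv G s)
    (t₀ σ c lam δ M : ℝ) (hlam : 0 ≤ lam)
    (hM : 2 * lam * δ * P / α₀ ≤ M)
    (w : EuclideanSpace ℝ (Fin N) → ℝ → ℝ)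
    (hw : ∀ x ∈ U, ∀ t : ℝ,
      G (w x t) = M * h x + σ + c + lam * (t - t₀) ^ 2) :
    ∀ x ∈ U, ∀ t : ℝ, |t - t₀| ≤ δ →
      DifferentiableAt ℝ (w x) t ∧
      stmtLaplacian (fun y => G (w y t)) x ≤ ρ x * deriv (w x) t := by
  intro x hx t ht
  have hdw : HasDerivAt (w x) ((deriv G (w x t))⁻¹ * (lam * (2 * (t - t₀)))) t := by
    refine hasDerivAt_of_comp_eq_of_pos_le_deriv hα₀ hG' (hw x hx) ?_
    simpa using ((((hasDerivAt_id t).sub_const t₀).pow 2).const_mul lam).const_add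
      (M * h x + σ + c)
  have hΔ : stmtLaplacian (fun y => G (w y t)) x = M * stmtLaplacian h x := by
    have hG_eq : (fun y => G (w y t)) =ᶠ[𝓝 x]
        fun y => M * h y + (σ + c + lam * (t - t₀) ^ 2) := by
      filter_upwards [hU.mem_nhds hx] with y hy
      rw [hw y hy t]
      ring
    rw [stmtLaplacian_congr hG_eq,
      stmtLaplacian_const_mul_add_const (hh.contDiffAt (hU.mem_nhds hx))]
  have hbound : |ρ x * ((deriv G (w x t))⁻¹ * (lam * (2 * (t - t₀))))| ≤ M := by
    have hv : |lam * (2 * (t - t₀))| ≤ 2 * lam * δ := by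
      rw [abs_mul, abs_mul, abs_of_nonneg hlam, abs_two]
      nlinarith
    refine (abs_mul_inv_mul_le_div (hρ x hx).1 (hρ x hx).2 hα₀ (hG' _) hv).trans ?_
    rwa [mul_comm P]
  have hM0 : 0 ≤ M := (abs_nonneg _).trans hbound
  refine ⟨hdw.differentiableAt, ?_⟩
  rw [hdw.deriv, hΔ]
  calc M * stmtLaplacian h x ≤ -M := by nlinarith [hΔh x hx]
    _ ≤ _ := neg_le_of_abs_le hbound

/-- The upper barrier `w = G⁻¹[Mh + σ + c + λ(t-t₀)²]` built from the Miller function `h`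
is a pointwise supersolution of `ρ ∂ₜ u = Δ[G(u)]` when `0 ≤ ρ ≤ P`. -/
theorem stmt_7 (N : ℕ) (hN : 1 ≤ N) (U : Set (EuclideanSpace ℝ (Fin N))) (hU : IsOpen U)
    (ρ : EuclideanSpace ℝ (Fin N) → ℝ) (P : ℝ) (hP : 0 < P)
    (hρ : ∀ x ∈ U, 0 ≤ ρ x ∧ ρ x ≤ P)
    (h : EuclideanSpace ℝ (Fin N) → ℝ) (hh : ContDiffOn ℝ 2 h U)
    (hΔh : ∀ x ∈ U, stmtLaplacian h x ≤ -1)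
    (G : ℝ → ℝ) (hG : ContDiff ℝ 1 G)
    (α₀ : ℝ) (hα₀ : 0 < α₀) (hG' : ∀ s : ℝ, α₀ ≤ deriv G s)
    (t₀ σ c lam δ M : ℝ) (hlam : 0 ≤ lam) (hδ : 0 < δ)
    (hM : 2 * lam * δ * P / α₀ ≤ M)
    (w : EuclideanSpace ℝ (Fin N) → ℝ → ℝ)
    (hw : ∀ x ∈ U, ∀ t : ℝ,
      G (w x t) = M * h x + σ + c + lam * (t - t₀) ^ 2) :
    ∀ x ∈ U, ∀ t : ℝ, |t - t₀| ≤ δ →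
      DifferentiableAt ℝ (w x) t ∧
      stmtLaplacian (fun y => G (w y t)) x ≤ ρ x * deriv (w x) t :=
  stmt_7_general N U hU ρ P hρ h hh hΔh G α₀ hα₀ hG' t₀ σ c lam δ M hlam hM w hw
end
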